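/- Let K be a commutative ring and A a nonpositively graded DG K-algebra, with Ā := H^0(A). Let M be a right DG A-module concentrated in degrees ≤ i₀ and N a left DG A-module concentrated in degrees ≤ j₀. Then there is a unique K-module isomorphism θ_{M,N} : H^{i₀}(M) ⊗_Ā H^{j₀}(N) ≅ H^{i₀+j₀}(M ⊗_A N) such that θ_{M,N}([m] ⊗ [n]) = [m ⊗ n] for all m ∈ M^{i₀}, n ∈ N^{j₀}. -/

import Mathlib

/-!
Both sides are quotients of `M^{i₀} ⊗_K N^{j₀}`: the source via `m ⊗ n ↦ [m] ⊗ [n]`, the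
target via `m ⊗ n ↦ [m ⊗ n]` (onto, since `M ⊗_K N` has nothing else in degree `i₀ + j₀`), and
the two kernels agree.

By right exactness of `⊗_K`, the kernel of the first map is generated by tensors with a
coboundary factor and by lifts of `Ā`-balancing relations; the former are coboundaries of
`M ⊗ N` because `M^{i₀+1} = N^{j₀+1} = 0`, the latter are `A⁰`-balancing relations.
Conversely, `x ⊗ y ↦ [x_{i₀}] ⊗ [y_{j₀}]` is defined on all of `M ⊗_K N` and kills coboundaries
and `A`-balancing relations: as `A` is nonpositive and `M`, `N` vanish above `i₀`, `j₀`, the top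
component of `x a` is `x_{i₀} a_0`.
-/

noncomputable section

open MulOpposite TensorProduct

/-- Balanced-tensor relations over a (noncommutative) `K`-algebra `Ab` inside the
`K`-tensor product of a right `Ab`-module and a left `Ab`-module. -/
def brelK (K : Type) [CommRing K] (Ab : Type) [Ring Ab] (X Y : Type)
    [AddCommGroup X] [AddCommGroup Y] [Module K X] [Module K Y]
    [Module Abᵐᵒᵖ X] [Module Ab Y] : Submodule K (X ⊗[K] Y) :=
  Submodule.span K {x | ∃ (a : Ab) (x' : X) (y' : Y),
    x = (op a • x') ⊗ₜ[K] y' - x' ⊗ₜ[K] (a • y')}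

/-- The tensor product `X ⊗_{Ab} Y` of a right `Ab`-module and a left `Ab`-module,
as a `K`-module. -/
abbrev BTK (K : Type) [CommRing K] (Ab : Type) [Ring Ab] (X Y : Type)
    [AddCommGroup X] [AddCommGroup Y] [Module K X] [Module K Y]
    [Module Abᵐᵒᵖ X] [Module Ab Y] :=
  (X ⊗[K] Y) ⧸ brelK K Ab X Y

/-- The pure tensor `x ⊗ y` in `X ⊗_{Ab} Y`. -/
def BTK.mk {K : Type} [CommRing K] {Ab : Type} [Ring Ab] {X Y : Type}
    [AddCommGroup X] [AddCommGroup Y] [Module K X] [Module K Y]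
    [Module Abᵐᵒᵖ X] [Module Ab Y] (x : X) (y : Y) : BTK K Ab X Y :=
  Submodule.Quotient.mk (x ⊗ₜ[K] y)

section Descent

variable {K P P' Q Q' X : Type} [CommRing K]
  [AddCommGroup P] [AddCommGroup P'] [AddCommGroup Q] [AddCommGroup Q'] [AddCommGroup X]
  [Module K P] [Module K P'] [Module K Q] [Module K Q'] [Module K X]

theorem LinearMap.exists_comp_eq_of_ker_le {f : P →ₗ[K] Q} (hf : Function.Surjective f)
    {g : P →ₗ[K] X} (h : LinearMap.ker f ≤ LinearMap.ker g) : ∃ g' : Q →ₗ[K] X, g' ∘ₗ f = g :=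
  ⟨(LinearMap.ker f).liftQ g h ∘ₗ (f.quotKerEquivOfSurjective hf).symm.toLinearMap, by
    ext p
    simp [f.quotKerEquivOfSurjective_symm_apply hf]⟩

theorem TensorProduct.exists_comp_map_eq {f : P →ₗ[K] P'} {g : Q →ₗ[K] Q'}
    (hf : Function.Surjective f) (hg : Function.Surjective g) {L : P ⊗[K] Q →ₗ[K] X}
    (hL₁ : ∀ p q, f p = 0 → L (p ⊗ₜ q) = 0) (hL₂ : ∀ p q, g q = 0 → L (p ⊗ₜ q) = 0) :
    ∃ L' : P' ⊗[K] Q' →ₗ[K] X, L' ∘ₗ map f g = L := by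
  refine LinearMap.exists_comp_eq_of_ker_le (map_surjective hf hg) ?_
  rw [map_ker (LinearMap.exact_subtype_ker_map f) hf (LinearMap.exact_subtype_ker_map g) hg,
    sup_le_iff, LinearMap.range_le_ker_iff, LinearMap.range_le_ker_iff]
  constructor <;> ext p q
  · exact hL₂ p q q.2
  · exact hL₁ p q p.2

theorem existsUnique_linearEquiv_comp_eq {p : X →ₗ[K] P} {q : X →ₗ[K] Q}
    (hp : Function.Surjective p) (hq : Function.Surjective q)
    (h : LinearMap.ker p = LinearMap.ker q) : ∃! e : P ≃ₗ[K] Q, e.toLinearMap ∘ₗ p = q := by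
  let e := (p.quotKerEquivOfSurjective hp).symm ≪≫ₗ Submodule.quotEquivOfEq _ _ h ≪≫ₗ
    q.quotKerEquivOfSurjective hq
  have he : e.toLinearMap ∘ₗ p = q := by
    ext x
    simp [e, p.quotKerEquivOfSurjective_symm_apply hp]
  exact ⟨e, he, fun e' he' =>
    LinearEquiv.toLinearMap_injective ((LinearMap.cancel_right hp).1 (he'.trans he.symm))⟩

end Descent

theorem brelK_le_ker {K Ab X Y Z : Type} [CommRing K] [Ring Ab]
    [AddCommGroup X] [AddCommGroup Y] [AddCommGroup Z] [Module K X] [Module K Y] [Module K Z]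
    [Module Abᵐᵒᵖ X] [Module Ab Y] {f : X ⊗[K] Y →ₗ[K] Z}
    (hf : ∀ (a : Ab) (x : X) (y : Y), f ((op a • x) ⊗ₜ y) = f (x ⊗ₜ (a • y))) :
    brelK K Ab X Y ≤ LinearMap.ker f := by
  rw [brelK, Submodule.span_le]
  rintro _ ⟨a, x, y, rfl⟩
  simp [hf]

theorem BTK.mk_op_smul {K Ab X Y : Type} [CommRing K] [Ring Ab]
    [AddCommGroup X] [AddCommGroup Y] [Module K X] [Module K Y]
    [Module Abᵐᵒᵖ X] [Module Ab Y] (a : Ab) (x : X) (y : Y) :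
    (BTK.mk (op a • x) y : BTK K Ab X Y) = BTK.mk x (a • y) :=
  (Submodule.Quotient.eq _).2 (Submodule.subset_span ⟨a, x, y, rfl⟩)

section GradedProjection

variable {K X : Type} [CommRing K] [AddCommGroup X] [Module K X]
  (𝒳 : ℤ → Submodule K X) [DirectSum.Decomposition 𝒳]

def gradedProj (i : ℤ) : X →ₗ[K] X :=
  (𝒳 i).subtype ∘ₗ DirectSum.component K ℤ (fun j => 𝒳 j) i ∘ₗ
    (DirectSum.decomposeLinearEquiv 𝒳).toLinearMap

variable {𝒳}

theorem gradedProj_of_mem {i : ℤ} {x : X} (hx : x ∈ 𝒳 i) : gradedProj 𝒳 i x = x :=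
  DirectSum.decompose_of_mem_same 𝒳 hx

theorem gradedProj_of_mem_of_ne {i j : ℤ} {x : X} (hx : x ∈ 𝒳 j) (h : j ≠ i) :
    gradedProj 𝒳 i x = 0 :=
  DirectSum.decompose_of_mem_ne 𝒳 hx h

theorem gradedProj_mem (i : ℤ) (x : X) : gradedProj 𝒳 i x ∈ 𝒳 i :=
  (DirectSum.decompose 𝒳 x i).2

theorem gradedProj_smul_of_nonpos {R S : Type} [AddCommGroup R] [Module K R]
    {𝒜 : ℤ → Submodule K R} [DirectSum.Decomposition 𝒜] (h𝒜 : ∀ e, 0 < e → 𝒜 e = ⊥)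
    [Semiring S] [Module S X] (φ : R →+ S)
    (hφ : ∀ e i, ∀ a ∈ 𝒜 e, ∀ x ∈ 𝒳 i, φ a • x ∈ 𝒳 (e + i))
    {t : ℤ} (h𝒳 : ∀ i, t < i → 𝒳 i = ⊥) (a : R) (x : X) :
    gradedProj 𝒳 t (φ a • x) = φ (gradedProj 𝒜 0 a) • gradedProj 𝒳 t x := by
  induction a using DirectSum.Decomposition.inductionOn 𝒜 with
  | zero => simp
  | add a a' ha ha' => simp only [map_add, add_smul, ha, ha']
  | @homogeneous e a =>
  induction x using DirectSum.Decomposition.inductionOn 𝒳 with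
  | zero => simp
  | add x x' hx hx' => simp only [smul_add, map_add, hx, hx']
  | @homogeneous i x =>
  rcases lt_or_ge 0 e with he | he
  · simp [(Submodule.eq_bot_iff _).1 (h𝒜 e he) _ a.2]
  rcases lt_or_ge t i with hi | hi
  · simp [(Submodule.eq_bot_iff _).1 (h𝒳 i hi) _ x.2]
  by_cases hei : e = 0 ∧ i = t
  · obtain ⟨rfl, rfl⟩ := hei
    rw [gradedProj_of_mem a.2, gradedProj_of_mem x.2,
      gradedProj_of_mem (by simpa using hφ 0 i a a.2 x x.2)]
  · rw [gradedProj_of_mem_of_ne (hφ e i a a.2 x x.2) (by omega)]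
    rcases not_and_or.1 hei with he | hi
    · simp [gradedProj_of_mem_of_ne a.2 he]
    · simp [gradedProj_of_mem_of_ne x.2 hi]

theorem cls_gradedProj_eq_zero_of_boundary {H : Type} [AddCommGroup H] [Module K H]
    {d : X →ₗ[K] X} (hd : ∀ i, ∀ x ∈ 𝒳 i, d x ∈ 𝒳 (i + 1)) {cls : X →ₗ[K] H} {t : ℤ}
    (hcls : ∀ y ∈ 𝒳 (t - 1), cls (d y) = 0) {i : ℤ} {x : X} (hx : x ∈ 𝒳 i) :
    cls (gradedProj 𝒳 t (d x)) = 0 := by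
  by_cases hi : i + 1 = t
  · subst hi
    rw [gradedProj_of_mem (hd i x hx)]
    exact hcls x (by simpa using hx)
  · rw [gradedProj_of_mem_of_ne (hd i x hx) hi, map_zero]

end GradedProjection

section KunnethTrick

variable {K R M N Ab HM HN : Type} [CommRing K] [Ring R]
  [AddCommGroup M] [Module K M] [Module Rᵐᵒᵖ M] [AddCommGroup N] [Module K N] [Module R N]
  [Ring Ab] [AddCommGroup HM] [Module K HM] [Module Abᵐᵒᵖ HM]
  [AddCommGroup HN] [Module K HN] [Module Ab HN]
  {ℳ : ℤ → Submodule K M} {𝒩 : ℤ → Submodule K N}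

variable (ℳ 𝒩) in
def tensorDegree (t : ℤ) : Submodule K (M ⊗[K] N) :=
  Submodule.span K {x | ∃ i, ∃ m ∈ ℳ i, ∃ n ∈ 𝒩 (t - i), x = m ⊗ₜ[K] n}

variable (ℳ 𝒩) in
def tensorBoundaries (dM : M →ₗ[K] M) (dN : N →ₗ[K] N) (t : ℤ) : Submodule K (M ⊗[K] N) :=
  Submodule.span K {x | ∃ i, ∃ m ∈ ℳ i, ∃ n ∈ 𝒩 (t - i),
    x = dM m ⊗ₜ[K] n + (Int.negOnePow i : ℤ) • (m ⊗ₜ[K] dN n)}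

variable (R ℳ 𝒩) in
abbrev tensorCohomology (dM : M →ₗ[K] M) (dN : N →ₗ[K] N) (t : ℤ) :=
  tensorDegree ℳ 𝒩 t ⧸ (tensorBoundaries ℳ 𝒩 dM dN (t - 1) ⊔ brelK K R M N).comap
    (tensorDegree ℳ 𝒩 t).subtype

theorem mapIncl_mem_tensorDegree (i j : ℤ) (x : ℳ i ⊗[K] 𝒩 j) :
    mapIncl (ℳ i) (𝒩 j) x ∈ tensorDegree ℳ 𝒩 (i + j) := by
  refine (range_map_eq_span_tmul _ _).le.trans (Submodule.span_mono ?_) ⟨x, rfl⟩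
  rintro _ ⟨m, n, rfl⟩
  exact ⟨i, m, m.2, n, by simp, rfl⟩

theorem tensorDegree_eq_range_mapIncl {i0 j0 : ℤ} (hMconc : ∀ i, i0 < i → ℳ i = ⊥)
    (hNconc : ∀ j, j0 < j → 𝒩 j = ⊥) :
    tensorDegree ℳ 𝒩 (i0 + j0) = LinearMap.range (mapIncl (ℳ i0) (𝒩 j0)) := by
  refine le_antisymm (Submodule.span_le.2 ?_) (LinearMap.range_le_iff_comap.2 ?_)
  · rintro _ ⟨i, m, hm, n, hn, rfl⟩
    rcases lt_trichotomy i i0 with hi | rfl | hi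
    · simp [(Submodule.eq_bot_iff _).1 (hNconc _ (by omega)) n hn]
    · exact ⟨⟨m, hm⟩ ⊗ₜ ⟨n, by simpa using hn⟩, rfl⟩
    · simp [(Submodule.eq_bot_iff _).1 (hMconc i hi) m hm]
  · exact eq_top_iff.2 fun x _ => mapIncl_mem_tensorDegree i0 j0 x

variable (R ℳ 𝒩) in
def tensorCohomologyMk (dM : M →ₗ[K] M) (dN : N →ₗ[K] N) (i0 j0 : ℤ) :
    ℳ i0 ⊗[K] 𝒩 j0 →ₗ[K] tensorCohomology R ℳ 𝒩 dM dN (i0 + j0) :=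
  Submodule.mkQ _ ∘ₗ (mapIncl (ℳ i0) (𝒩 j0)).codRestrict _ (mapIncl_mem_tensorDegree i0 j0)

theorem tensorCohomologyMk_surjective {dM : M →ₗ[K] M} {dN : N →ₗ[K] N} {i0 j0 : ℤ}
    (hMconc : ∀ i, i0 < i → ℳ i = ⊥) (hNconc : ∀ j, j0 < j → 𝒩 j = ⊥) :
    Function.Surjective (tensorCohomologyMk R ℳ 𝒩 dM dN i0 j0) := by
  refine (Submodule.mkQ_surjective _).comp fun ⟨x, hx⟩ => ?_
  obtain ⟨y, rfl⟩ := (tensorDegree_eq_range_mapIncl hMconc hNconc).le hx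
  exact ⟨y, rfl⟩

theorem ker_tensorCohomologyMk {dM : M →ₗ[K] M} {dN : N →ₗ[K] N} {i0 j0 : ℤ} :
    LinearMap.ker (tensorCohomologyMk R ℳ 𝒩 dM dN i0 j0) =
      (tensorBoundaries ℳ 𝒩 dM dN (i0 + j0 - 1) ⊔ brelK K R M N).comap
        (mapIncl (ℳ i0) (𝒩 j0)) := by
  rw [tensorCohomologyMk, LinearMap.ker_comp, Submodule.ker_mkQ, ← Submodule.comap_comp,
    LinearMap.subtype_comp_codRestrict]

theorem tensorCohomologyMk_tmul_eq_zero_of_boundary_right {dM : M →ₗ[K] M} {dN : N →ₗ[K] N}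
    {i0 j0 : ℤ} (hdM : ∀ (j : ℤ), ∀ m ∈ ℳ j, dM m ∈ ℳ (j + 1))
    (hMconc : ∀ i, i0 < i → ℳ i = ⊥) (x : ℳ i0) (y : 𝒩 j0) {y' : N} (hy' : y' ∈ 𝒩 (j0 - 1))
    (hy : dN y' = y) : tensorCohomologyMk R ℳ 𝒩 dM dN i0 j0 (x ⊗ₜ y) = 0 := by
  have hdx : dM x = 0 := (Submodule.eq_bot_iff _).1 (hMconc (i0 + 1) (by omega)) _ (hdM i0 x x.2)
  have hmem : dM x ⊗ₜ[K] y' + (Int.negOnePow i0 : ℤ) • ((x : M) ⊗ₜ[K] dN y') ∈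
      tensorBoundaries ℳ 𝒩 dM dN (i0 + j0 - 1) :=
    Submodule.subset_span ⟨i0, x, x.2, y', by rwa [add_sub_assoc, add_sub_cancel_left], rfl⟩
  rw [hdx, zero_tmul, zero_add, ← Units.smul_def, Submodule.smul_mem_iff', hy] at hmem
  rw [LinearMap.mem_ker.symm, ker_tensorCohomologyMk]
  exact Submodule.mem_sup_left hmem

theorem tensorCohomologyMk_tmul_eq_zero_of_boundary_left {dM : M →ₗ[K] M} {dN : N →ₗ[K] N}
    {i0 j0 : ℤ} (hdN : ∀ (j : ℤ), ∀ n ∈ 𝒩 j, dN n ∈ 𝒩 (j + 1))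
    (hNconc : ∀ j, j0 < j → 𝒩 j = ⊥) (x : ℳ i0) (y : 𝒩 j0) {x' : M} (hx' : x' ∈ ℳ (i0 - 1))
    (hx : dM x' = x) : tensorCohomologyMk R ℳ 𝒩 dM dN i0 j0 (x ⊗ₜ y) = 0 := by
  have hdy : dN y = 0 := (Submodule.eq_bot_iff _).1 (hNconc (j0 + 1) (by omega)) _ (hdN j0 y y.2)
  have hmem : dM x' ⊗ₜ[K] (y : N) + (Int.negOnePow (i0 - 1) : ℤ) • (x' ⊗ₜ[K] dN y) ∈
      tensorBoundaries ℳ 𝒩 dM dN (i0 + j0 - 1) :=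
    Submodule.subset_span ⟨i0 - 1, x', hx', y, by simp, rfl⟩
  rw [hdy, tmul_zero, smul_zero, add_zero, hx] at hmem
  rw [LinearMap.mem_ker.symm, ker_tensorCohomologyMk]
  exact Submodule.mem_sup_left hmem

theorem tensorCohomologyMk_tmul_eq_of_smul {dM : M →ₗ[K] M} {dN : N →ₗ[K] N} {i0 j0 : ℤ}
    (a : R) (x x' : ℳ i0) (y y' : 𝒩 j0) (hx : (x' : M) = op a • x) (hy : (y' : N) = a • y) :
    tensorCohomologyMk R ℳ 𝒩 dM dN i0 j0 (x' ⊗ₜ y) =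
      tensorCohomologyMk R ℳ 𝒩 dM dN i0 j0 (x ⊗ₜ y') := by
  rw [← sub_eq_zero, ← map_sub, LinearMap.mem_ker.symm, ker_tensorCohomologyMk]
  refine Submodule.mem_sup_right (Submodule.subset_span ⟨a, x, y, ?_⟩)
  simp [hx, hy]
variable (Ab ℳ 𝒩) in
def cohomologyTensorMk (clsM : M →ₗ[K] HM) (clsN : N →ₗ[K] HN) (i0 j0 : ℤ) :
    ℳ i0 ⊗[K] 𝒩 j0 →ₗ[K] BTK K Ab HM HN :=
  (brelK K Ab HM HN).mkQ ∘ₗ map (clsM ∘ₗ (ℳ i0).subtype) (clsN ∘ₗ (𝒩 j0).subtype)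

theorem cohomologyTensorMk_surjective {clsM : M →ₗ[K] HM} {clsN : N →ₗ[K] HN} {i0 j0 : ℤ}
    (hclsMsurj : ∀ h : HM, ∃ m ∈ ℳ i0, clsM m = h)
    (hclsNsurj : ∀ h : HN, ∃ n ∈ 𝒩 j0, clsN n = h) :
    Function.Surjective (cohomologyTensorMk Ab ℳ 𝒩 clsM clsN i0 j0) := by
  refine (Submodule.mkQ_surjective _).comp (map_surjective (fun h => ?_) (fun h => ?_))
  · obtain ⟨m, hm, rfl⟩ := hclsMsurj h
    exact ⟨⟨m, hm⟩, rfl⟩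
  · obtain ⟨n, hn, rfl⟩ := hclsNsurj h
    exact ⟨⟨n, hn⟩, rfl⟩

section Lift

variable [Module K R] [Module K Ab] {𝒜 : ℤ → Submodule K R}

theorem ker_cohomologyTensorMk_le_ker_tensorCohomologyMk {dM : M →ₗ[K] M} {dN : N →ₗ[K] N}
    {prA : R →ₗ[K] Ab} {clsM : M →ₗ[K] HM} {clsN : N →ₗ[K] HN} {i0 j0 : ℤ}
    (hMact : ∀ (i j : ℤ), ∀ a ∈ 𝒜 i, ∀ m ∈ ℳ j, op a • m ∈ ℳ (j + i))
    (hdM : ∀ (j : ℤ), ∀ m ∈ ℳ j, dM m ∈ ℳ (j + 1))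
    (hMconc : ∀ i, i0 < i → ℳ i = ⊥)
    (hNact : ∀ (i j : ℤ), ∀ a ∈ 𝒜 i, ∀ n ∈ 𝒩 j, a • n ∈ 𝒩 (i + j))
    (hdN : ∀ (j : ℤ), ∀ n ∈ 𝒩 j, dN n ∈ 𝒩 (j + 1))
    (hNconc : ∀ j, j0 < j → 𝒩 j = ⊥)
    (hprsurj : ∀ y : Ab, ∃ a ∈ 𝒜 0, prA a = y)
    (hclsMsurj : ∀ h : HM, ∃ m ∈ ℳ i0, clsM m = h)
    (hclsMker : ∀ m ∈ ℳ i0, (clsM m = 0 ↔ ∃ x ∈ ℳ (i0 - 1), dM x = m))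
    (hclsMact : ∀ a ∈ 𝒜 0, ∀ m ∈ ℳ i0, clsM (op a • m) = op (prA a) • clsM m)
    (hclsNsurj : ∀ h : HN, ∃ n ∈ 𝒩 j0, clsN n = h)
    (hclsNker : ∀ n ∈ 𝒩 j0, (clsN n = 0 ↔ ∃ y ∈ 𝒩 (j0 - 1), dN y = n))
    (hclsNact : ∀ a ∈ 𝒜 0, ∀ n ∈ 𝒩 j0, clsN (a • n) = prA a • clsN n) :
    LinearMap.ker (cohomologyTensorMk Ab ℳ 𝒩 clsM clsN i0 j0) ≤
      LinearMap.ker (tensorCohomologyMk R ℳ 𝒩 dM dN i0 j0) := by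
  have hcM : Function.Surjective (clsM ∘ₗ (ℳ i0).subtype) := fun h => by
    obtain ⟨m, hm, rfl⟩ := hclsMsurj h
    exact ⟨⟨m, hm⟩, rfl⟩
  have hcN : Function.Surjective (clsN ∘ₗ (𝒩 j0).subtype) := fun h => by
    obtain ⟨n, hn, rfl⟩ := hclsNsurj h
    exact ⟨⟨n, hn⟩, rfl⟩
  obtain ⟨g, hg⟩ := exists_comp_map_eq (L := tensorCohomologyMk R ℳ 𝒩 dM dN i0 j0) hcM hcN
    (fun x y hx => by
      obtain ⟨x', hx', e⟩ := (hclsMker x x.2).1 hx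
      exact tensorCohomologyMk_tmul_eq_zero_of_boundary_left hdN hNconc x y hx' e)
    (fun x y hy => by
      obtain ⟨y', hy', e⟩ := (hclsNker y y.2).1 hy
      exact tensorCohomologyMk_tmul_eq_zero_of_boundary_right hdM hMconc x y hy' e)
  have hbal : brelK K Ab HM HN ≤ LinearMap.ker g := brelK_le_ker fun α h h' => by
    obtain ⟨a, ha, rfl⟩ := hprsurj α
    obtain ⟨⟨m, hm⟩, rfl⟩ := hcM h
    obtain ⟨⟨n, hn⟩, rfl⟩ := hcN h'
    have ham : op a • m ∈ ℳ i0 := by simpa using hMact 0 i0 a ha m hm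
    have han : a • n ∈ 𝒩 j0 := by simpa using hNact 0 j0 a ha n hn
    have e₁ : op (prA a) • (clsM ∘ₗ (ℳ i0).subtype) ⟨m, hm⟩ =
        (clsM ∘ₗ (ℳ i0).subtype) ⟨op a • m, ham⟩ := (hclsMact a ha m hm).symm
    have e₂ : prA a • (clsN ∘ₗ (𝒩 j0).subtype) ⟨n, hn⟩ =
        (clsN ∘ₗ (𝒩 j0).subtype) ⟨a • n, han⟩ := (hclsNact a ha n hn).symm
    rw [e₁, e₂, ← map_tmul, ← map_tmul, ← LinearMap.comp_apply, ← LinearMap.comp_apply, hg]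
    exact tensorCohomologyMk_tmul_eq_of_smul a _ _ _ _ rfl rfl
  intro t ht
  rw [LinearMap.mem_ker, ← hg, LinearMap.comp_apply]
  exact hbal ((Submodule.Quotient.mk_eq_zero _).1 ht)

end Lift

section Truncation

variable [DirectSum.Decomposition ℳ] [DirectSum.Decomposition 𝒩]

variable (Ab ℳ 𝒩) in
def projCohomologyTensorMk (clsM : M →ₗ[K] HM) (clsN : N →ₗ[K] HN) (i0 j0 : ℤ) :
    M ⊗[K] N →ₗ[K] BTK K Ab HM HN :=
  (brelK K Ab HM HN).mkQ ∘ₗ map (clsM ∘ₗ gradedProj ℳ i0) (clsN ∘ₗ gradedProj 𝒩 j0)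

@[simp]
theorem projCohomologyTensorMk_tmul (clsM : M →ₗ[K] HM) (clsN : N →ₗ[K] HN) (i0 j0 : ℤ)
    (m : M) (n : N) :
    projCohomologyTensorMk Ab ℳ 𝒩 clsM clsN i0 j0 (m ⊗ₜ n) =
      BTK.mk (clsM (gradedProj ℳ i0 m)) (clsN (gradedProj 𝒩 j0 n)) :=
  rfl

theorem tensorBoundaries_le_ker_projCohomologyTensorMk {dM : M →ₗ[K] M} {dN : N →ₗ[K] N}
    {clsM : M →ₗ[K] HM} {clsN : N →ₗ[K] HN} {i0 j0 : ℤ}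
    (hdM : ∀ (j : ℤ), ∀ m ∈ ℳ j, dM m ∈ ℳ (j + 1))
    (hdN : ∀ (j : ℤ), ∀ n ∈ 𝒩 j, dN n ∈ 𝒩 (j + 1))
    (hclsMker : ∀ m ∈ ℳ i0, (clsM m = 0 ↔ ∃ x ∈ ℳ (i0 - 1), dM x = m))
    (hclsNker : ∀ n ∈ 𝒩 j0, (clsN n = 0 ↔ ∃ y ∈ 𝒩 (j0 - 1), dN y = n)) (t : ℤ) :
    tensorBoundaries ℳ 𝒩 dM dN t ≤
      LinearMap.ker (projCohomologyTensorMk Ab ℳ 𝒩 clsM clsN i0 j0) := by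
  rw [tensorBoundaries, Submodule.span_le]
  rintro _ ⟨i, m, hm, n, hn, rfl⟩
  have hM := cls_gradedProj_eq_zero_of_boundary hdM (fun x hx =>
    (hclsMker _ (by simpa using hdM _ x hx)).2 ⟨x, hx, rfl⟩) hm
  have hN := cls_gradedProj_eq_zero_of_boundary hdN (fun y hy =>
    (hclsNker _ (by simpa using hdN _ y hy)).2 ⟨y, hy, rfl⟩) hn
  simp [hM, hN, BTK.mk]

theorem projCohomologyTensorMk_comp_mapIncl (clsM : M →ₗ[K] HM) (clsN : N →ₗ[K] HN)
    (i0 j0 : ℤ) :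
    projCohomologyTensorMk Ab ℳ 𝒩 clsM clsN i0 j0 ∘ₗ mapIncl (ℳ i0) (𝒩 j0) =
      cohomologyTensorMk Ab ℳ 𝒩 clsM clsN i0 j0 := by
  ext m n
  simp [gradedProj_of_mem m.2, gradedProj_of_mem n.2, cohomologyTensorMk, BTK.mk]

variable [Module K R] [Module K Ab] {𝒜 : ℤ → Submodule K R} [DirectSum.Decomposition 𝒜]

theorem cls_gradedProj_op_smul {prA : R →ₗ[K] Ab} {clsM : M →ₗ[K] HM} {i0 : ℤ}
    (hA : ∀ i, 0 < i → 𝒜 i = ⊥)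
    (hMact : ∀ (i j : ℤ), ∀ a ∈ 𝒜 i, ∀ m ∈ ℳ j, op a • m ∈ ℳ (j + i))
    (hMconc : ∀ i, i0 < i → ℳ i = ⊥)
    (hclsMact : ∀ a ∈ 𝒜 0, ∀ m ∈ ℳ i0, clsM (op a • m) = op (prA a) • clsM m) (a : R) (m : M) :
    clsM (gradedProj ℳ i0 (op a • m)) =
      op (prA (gradedProj 𝒜 0 a)) • clsM (gradedProj ℳ i0 m) := by
  rw [← hclsMact _ (gradedProj_mem 0 a) _ (gradedProj_mem i0 m)]
  exact congrArg clsM (gradedProj_smul_of_nonpos hA (opAddEquiv : R ≃+ Rᵐᵒᵖ).toAddMonoidHom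
    (fun e i a ha x hx => add_comm i e ▸ hMact e i a ha x hx) hMconc a m)

theorem cls_gradedProj_smul {prA : R →ₗ[K] Ab} {clsN : N →ₗ[K] HN} {j0 : ℤ}
    (hA : ∀ i, 0 < i → 𝒜 i = ⊥)
    (hNact : ∀ (i j : ℤ), ∀ a ∈ 𝒜 i, ∀ n ∈ 𝒩 j, a • n ∈ 𝒩 (i + j))
    (hNconc : ∀ j, j0 < j → 𝒩 j = ⊥)
    (hclsNact : ∀ a ∈ 𝒜 0, ∀ n ∈ 𝒩 j0, clsN (a • n) = prA a • clsN n) (a : R) (n : N) :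
    clsN (gradedProj 𝒩 j0 (a • n)) = prA (gradedProj 𝒜 0 a) • clsN (gradedProj 𝒩 j0 n) := by
  rw [← hclsNact _ (gradedProj_mem 0 a) _ (gradedProj_mem j0 n)]
  exact congrArg clsN (gradedProj_smul_of_nonpos hA (AddMonoidHom.id R) hNact hNconc a n)

theorem brelK_le_ker_projCohomologyTensorMk {prA : R →ₗ[K] Ab}
    {clsM : M →ₗ[K] HM} {clsN : N →ₗ[K] HN} {i0 j0 : ℤ}
    (hA : ∀ i, 0 < i → 𝒜 i = ⊥)
    (hMact : ∀ (i j : ℤ), ∀ a ∈ 𝒜 i, ∀ m ∈ ℳ j, op a • m ∈ ℳ (j + i))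
    (hMconc : ∀ i, i0 < i → ℳ i = ⊥)
    (hNact : ∀ (i j : ℤ), ∀ a ∈ 𝒜 i, ∀ n ∈ 𝒩 j, a • n ∈ 𝒩 (i + j))
    (hNconc : ∀ j, j0 < j → 𝒩 j = ⊥)
    (hclsMact : ∀ a ∈ 𝒜 0, ∀ m ∈ ℳ i0, clsM (op a • m) = op (prA a) • clsM m)
    (hclsNact : ∀ a ∈ 𝒜 0, ∀ n ∈ 𝒩 j0, clsN (a • n) = prA a • clsN n) :
    brelK K R M N ≤ LinearMap.ker (projCohomologyTensorMk Ab ℳ 𝒩 clsM clsN i0 j0) :=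
  brelK_le_ker fun a m n => by
    rw [projCohomologyTensorMk_tmul, projCohomologyTensorMk_tmul,
      cls_gradedProj_op_smul hA hMact hMconc hclsMact, BTK.mk_op_smul,
      cls_gradedProj_smul hA hNact hNconc hclsNact]

theorem ker_tensorCohomologyMk_le_ker_cohomologyTensorMk {dM : M →ₗ[K] M} {dN : N →ₗ[K] N}
    {prA : R →ₗ[K] Ab} {clsM : M →ₗ[K] HM} {clsN : N →ₗ[K] HN} {i0 j0 : ℤ}
    (hA : ∀ i, 0 < i → 𝒜 i = ⊥)
    (hMact : ∀ (i j : ℤ), ∀ a ∈ 𝒜 i, ∀ m ∈ ℳ j, op a • m ∈ ℳ (j + i))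
    (hdM : ∀ (j : ℤ), ∀ m ∈ ℳ j, dM m ∈ ℳ (j + 1))
    (hMconc : ∀ i, i0 < i → ℳ i = ⊥)
    (hNact : ∀ (i j : ℤ), ∀ a ∈ 𝒜 i, ∀ n ∈ 𝒩 j, a • n ∈ 𝒩 (i + j))
    (hdN : ∀ (j : ℤ), ∀ n ∈ 𝒩 j, dN n ∈ 𝒩 (j + 1))
    (hNconc : ∀ j, j0 < j → 𝒩 j = ⊥)
    (hclsMker : ∀ m ∈ ℳ i0, (clsM m = 0 ↔ ∃ x ∈ ℳ (i0 - 1), dM x = m))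
    (hclsMact : ∀ a ∈ 𝒜 0, ∀ m ∈ ℳ i0, clsM (op a • m) = op (prA a) • clsM m)
    (hclsNker : ∀ n ∈ 𝒩 j0, (clsN n = 0 ↔ ∃ y ∈ 𝒩 (j0 - 1), dN y = n))
    (hclsNact : ∀ a ∈ 𝒜 0, ∀ n ∈ 𝒩 j0, clsN (a • n) = prA a • clsN n) :
    LinearMap.ker (tensorCohomologyMk R ℳ 𝒩 dM dN i0 j0) ≤
      LinearMap.ker (cohomologyTensorMk Ab ℳ 𝒩 clsM clsN i0 j0) := by
  rw [ker_tensorCohomologyMk, ← projCohomologyTensorMk_comp_mapIncl, LinearMap.ker_comp]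
  exact Submodule.comap_mono (sup_le
    (tensorBoundaries_le_ker_projCohomologyTensorMk hdM hdN hclsMker hclsNker _)
    (brelK_le_ker_projCohomologyTensorMk hA hMact hMconc hNact hNconc hclsMact hclsNact))

end Truncation

end KunnethTrick

/-- Plain Künneth trick over a nonpositive DG `K`-algebra `A` with
`Ā = H⁰(A)`: for a right DG `A`-module `M` concentrated in degrees ≤ i₀ and a left DG
`A`-module `N` concentrated in degrees ≤ j₀, there is a unique `K`-module isomorphism
`θ : H^{i₀}(M) ⊗_Ā H^{j₀}(N) ≅ H^{i₀+j₀}(M ⊗_A N)` with `θ([m] ⊗ [n]) = [m ⊗ n]`. -/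
theorem dg_kunneth_trick
    (K : Type) [CommRing K] (i0 j0 : ℤ)
    -- the nonpositive DG K-algebra A, as a graded K-algebra R with differential dR
    (R : Type) [Ring R] [Algebra K R] (𝒜 : ℤ → Submodule K R) [GradedRing 𝒜]
    (hA : ∀ i, 0 < i → 𝒜 i = ⊥)
    -- M : right DG A-module concentrated in degrees ≤ i₀
    (M : Type) [AddCommGroup M] [Module K M] [Module Rᵐᵒᵖ M]
    (ℳ : ℤ → Submodule K M) [DirectSum.Decomposition ℳ]
    (hMact : ∀ (i j : ℤ), ∀ a ∈ 𝒜 i, ∀ m ∈ ℳ j, op a • m ∈ ℳ (j + i))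
    (dM : M →ₗ[K] M) (hdM : ∀ (j : ℤ), ∀ m ∈ ℳ j, dM m ∈ ℳ (j + 1))
    (hMconc : ∀ i, i0 < i → ℳ i = ⊥)
    -- N : left DG A-module concentrated in degrees ≤ j₀
    (N : Type) [AddCommGroup N] [Module K N] [Module R N]
    (𝒩 : ℤ → Submodule K N) [DirectSum.Decomposition 𝒩]
    (hNact : ∀ (i j : ℤ), ∀ a ∈ 𝒜 i, ∀ n ∈ 𝒩 j, a • n ∈ 𝒩 (i + j))
    (dN : N →ₗ[K] N) (hdN : ∀ (j : ℤ), ∀ n ∈ 𝒩 j, dN n ∈ 𝒩 (j + 1))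
    (hNconc : ∀ j, j0 < j → 𝒩 j = ⊥)
    -- Ā = H⁰(A) : a K-algebra with a projection prA : A⁰ → Ā, multiplicative on A⁰,
    -- surjective, with kernel d(A⁻¹)
    (Ab : Type) [Ring Ab] [Algebra K Ab] (prA : R →ₗ[K] Ab)
    (hprsurj : ∀ y : Ab, ∃ a ∈ 𝒜 0, prA a = y)
    -- HM = H^{i₀}(M) : a right Ā-module with projection clsM from the cocycles ℳ^{i₀}
    (HM : Type) [AddCommGroup HM] [Module K HM] [Module Abᵐᵒᵖ HM]
    (clsM : M →ₗ[K] HM)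
    (hclsMsurj : ∀ h : HM, ∃ m ∈ ℳ i0, clsM m = h)
    (hclsMker : ∀ m ∈ ℳ i0, (clsM m = 0 ↔ ∃ x ∈ ℳ (i0 - 1), dM x = m))
    (hclsMact : ∀ a ∈ 𝒜 0, ∀ m ∈ ℳ i0,
      clsM (op a • m) = op (prA a) • clsM m)
    -- HN = H^{j₀}(N) : a left Ā-module with projection clsN from the cocycles 𝒩^{j₀}
    (HN : Type) [AddCommGroup HN] [Module K HN] [Module Ab HN]
    (clsN : N →ₗ[K] HN)
    (hclsNsurj : ∀ h : HN, ∃ n ∈ 𝒩 j0, clsN n = h)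
    (hclsNker : ∀ n ∈ 𝒩 j0, (clsN n = 0 ↔ ∃ y ∈ 𝒩 (j0 - 1), dN y = n))
    (hclsNact : ∀ a ∈ 𝒜 0, ∀ n ∈ 𝒩 j0, clsN (a • n) = prA a • clsN n) :
    -- H^{i₀+j₀}(M ⊗_A N) is the degree-(i₀+j₀) part of M ⊗ N modulo coboundaries and
    -- balanced relations; the unique isomorphism θ sends [m] ⊗ [n] to [m ⊗ n]
    ∃! θ : BTK K Ab HM HN ≃ₗ[K]
        (↥(Submodule.span K {x : M ⊗[K] N | ∃ i, ∃ m ∈ ℳ i, ∃ n ∈ 𝒩 (i0 + j0 - i),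
            x = m ⊗ₜ[K] n}) ⧸
          Submodule.comap
            (Submodule.span K {x : M ⊗[K] N | ∃ i, ∃ m ∈ ℳ i, ∃ n ∈ 𝒩 (i0 + j0 - i),
              x = m ⊗ₜ[K] n}).subtype
            ((Submodule.span K {x : M ⊗[K] N | ∃ i, ∃ m ∈ ℳ i, ∃ n ∈ 𝒩 (i0 + j0 - 1 - i),
                x = (dM m) ⊗ₜ[K] n + (Int.negOnePow i : ℤ) • (m ⊗ₜ[K] (dN n))}) ⊔
              brelK K R M N)),
      ∀ m (hm : m ∈ ℳ i0) n (hn : n ∈ 𝒩 j0),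
        θ (BTK.mk (clsM m) (clsN n)) =
          Submodule.Quotient.mk
            ⟨m ⊗ₜ[K] n, Submodule.subset_span
              ⟨i0, m, hm, n, by rw [show i0 + j0 - i0 = j0 by ring]; exact hn, rfl⟩⟩ := by
  have hker := le_antisymm
    (ker_cohomologyTensorMk_le_ker_tensorCohomologyMk (R := R) (dM := dM) (dN := dN) hMact hdM
      hMconc hNact hdN hNconc hprsurj hclsMsurj hclsMker hclsMact hclsNsurj hclsNker hclsNact)
    (ker_tensorCohomologyMk_le_ker_cohomologyTensorMk hA hMact hdM hMconc hNact hdN hNconc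
      hclsMker hclsMact hclsNker hclsNact)
  obtain ⟨θ, hθ, huniq⟩ := existsUnique_linearEquiv_comp_eq
    (cohomologyTensorMk_surjective hclsMsurj hclsNsurj)
    (tensorCohomologyMk_surjective hMconc hNconc) hker
  exact ⟨θ, fun m hm n hn => LinearMap.congr_fun hθ (⟨m, hm⟩ ⊗ₜ ⟨n, hn⟩),
    fun θ' hθ' => huniq θ' (TensorProduct.ext' fun x y => hθ' x x.2 y y.2)⟩
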